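/- Two parallel equilateral triangles in phase on $S^2$, at heights $z = \pm z_0$, satisfy the critical configuration equations for the logarithmic Fekete problem with $6$ points if $z_0^2 = \frac{-3 + 2\sqrt{6}}{5}$. -/

import Mathlib

/-!
Seen from any vertex `w k`, the other five points come in three classes: the two other vertices
of its own triangle at squared distance `3R²`, the vertex directly above or below it at `4z²`, and
the two remaining vertices at `3R² + 4z²`. Since the vertices of each triangle sum to zero
horizontally, the horizontal part of `∑ⱼ (w k - w j) / ‖w k - w j‖²` is `1/R² + 3/(3R² + 4z²)`
times that of `w k`, and the vertical part is `1/(2z²) + 4/(3R² + 4z²)` times that of `w k`.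
With `R² = 1 - z²` both factors equal `5/2` exactly when `5z⁴ + 6z² - 3 = 0`, whose positive root
is `z² = (-3 + 2√6)/5`.
-/

open Finset Real

noncomputable def twoTriangles (R z : ℝ) : Fin 6 → EuclideanSpace ℝ (Fin 3) :=
  ![!₂[R, 0, -z], !₂[-(R / 2), R * √3 / 2, -z], !₂[-(R / 2), -(R * √3 / 2), -z],
    !₂[R, 0, z], !₂[-(R / 2), R * √3 / 2, z], !₂[-(R / 2), -(R * √3 / 2), z]]

lemma norm_twoTriangles_sub_sq (R z : ℝ) (k j : Fin 6) :
    ‖twoTriangles R z k - twoTriangles R z j‖ ^ 2 =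
      if k = j then 0
      else if (k : ℕ) / 3 = (j : ℕ) / 3 then 3 * R ^ 2
      else if (k : ℕ) % 3 = (j : ℕ) % 3 then 4 * z ^ 2
      else 3 * R ^ 2 + 4 * z ^ 2 := by
  have h3 : √3 ^ 2 = 3 := sq_sqrt (by norm_num)
  rw [EuclideanSpace.real_norm_sq_eq, Fin.sum_univ_three]
  fin_cases k <;> fin_cases j <;> simp [twoTriangles] <;> ring_nf <;> simp only [h3] <;> ring

theorem twoTriangles_critical {R z c : ℝ}
    (horizontal : (R ^ 2)⁻¹ + 3 * (3 * R ^ 2 + 4 * z ^ 2)⁻¹ = c)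
    (vertical : (2 * z ^ 2)⁻¹ + 4 * (3 * R ^ 2 + 4 * z ^ 2)⁻¹ = c) (k : Fin 6) :
    c • twoTriangles R z k = ∑ j, (‖twoTriangles R z k - twoTriangles R z j‖ ^ 2)⁻¹ •
      (twoTriangles R z k - twoTriangles R z j) := by
  ext i
  simp only [norm_twoTriangles_sub_sq, PiLp.smul_apply, smul_eq_mul, Fin.sum_univ_six]
  fin_cases i
  · subst horizontal
    fin_cases k <;> simp [twoTriangles] <;> ring
  · subst horizontal
    fin_cases k <;> simp [twoTriangles] <;> ring
  · subst vertical
    fin_cases k <;> simp [twoTriangles] <;> ring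

lemma twoTriangles_eq (R z : ℝ) (k : Fin 6) :
    twoTriangles R z k = (WithLp.equiv 2 (Fin 3 → ℝ)).symm
      (if (k : ℕ) < 3 then
        ![R * cos (2 * π * k / 3), R * sin (2 * π * k / 3), -z]
      else
        ![R * cos (2 * π * ((k : ℕ) - 3) / 3),
          R * sin (2 * π * ((k : ℕ) - 3) / 3), z]) := by
  have cos₁ : cos (2 * π / 3) = -(1 / 2) := by
    rw [show 2 * π / 3 = π - π / 3 by ring, cos_pi_sub, cos_pi_div_three]
  have sin₁ : sin (2 * π / 3) = √3 / 2 := by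
    rw [show 2 * π / 3 = π - π / 3 by ring, sin_pi_sub, sin_pi_div_three]
  have cos₂ : cos (2 * π * 2 / 3) = -(1 / 2) := by
    rw [show 2 * π * 2 / 3 = π / 3 + π by ring, cos_add_pi, cos_pi_div_three]
  have sin₂ : sin (2 * π * 2 / 3) = -(√3 / 2) := by
    rw [show 2 * π * 2 / 3 = π / 3 + π by ring, sin_add_pi, sin_pi_div_three]
  ext i
  fin_cases k <;> fin_cases i <;> norm_num [twoTriangles, cos₁, sin₁, cos₂, sin₂] <;> ring

theorem three_three_points_critical_general (z0 : ℝ)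
    (hz0 : z0 ^ 2 = (-3 + 2 * Real.sqrt 6) / 5)
    (R : ℝ) (hR : R = Real.sqrt (1 - z0 ^ 2))
    (w : Fin 6 → EuclideanSpace ℝ (Fin 3))
    (hw : ∀ k : Fin 6, w k = (WithLp.equiv 2 (Fin 3 → ℝ)).symm
      (if (k : ℕ) < 3 then
        ![R * Real.cos (2 * π * k / 3), R * Real.sin (2 * π * k / 3), -z0]
      else
        ![R * Real.cos (2 * π * ((k : ℕ) - 3) / 3),
          R * Real.sin (2 * π * ((k : ℕ) - 3) / 3), z0])) :
    ∀ k, (5 / 2 : ℝ) • w k =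
      ∑ j ∈ Finset.univ.erase k, (‖w k - w j‖ ^ 2)⁻¹ • (w k - w j) := by
  have root : 5 * (z0 ^ 2) ^ 2 + 6 * z0 ^ 2 - 3 = 0 := by
    have h6 : √6 ^ 2 = 6 := sq_sqrt (by norm_num)
    linear_combination (5 * z0 ^ 2 + 3 + 2 * √6) * hz0 + 4 / 5 * h6
  have hz : z0 ≠ 0 := by rintro rfl; norm_num at root
  have hz1 : 0 < 1 - z0 ^ 2 := by nlinarith [sq_nonneg z0]
  have hR2 : R ^ 2 = 1 - z0 ^ 2 := by rw [hR, sq_sqrt hz1.le]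
  have hD : 3 * R ^ 2 + 4 * z0 ^ 2 = 3 + z0 ^ 2 := by rw [hR2]; ring
  have horizontal : (R ^ 2)⁻¹ + 3 * (3 * R ^ 2 + 4 * z0 ^ 2)⁻¹ = 5 / 2 := by
    rw [hD, hR2]; field_simp; linear_combination root
  have vertical : (2 * z0 ^ 2)⁻¹ + 4 * (3 * R ^ 2 + 4 * z0 ^ 2)⁻¹ = 5 / 2 := by
    rw [hD]; field_simp; linear_combination -root
  obtain rfl : w = twoTriangles R z0 := funext fun j => (hw j).trans (twoTriangles_eq R z0 j).symm
  intro k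
  -- the omitted term `j = k` is `0⁻¹ • 0 = 0`
  rw [Finset.sum_erase _ (by simp)]
  exact twoTriangles_critical horizontal vertical k

theorem three_three_points_critical (z0 : ℝ)
    (hz0 : z0 ^ 2 = (-3 + 2 * Real.sqrt 6) / 5) (hz0pos : 0 < z0) (hz0lt : z0 < 1)
    (R : ℝ) (hR : R = Real.sqrt (1 - z0 ^ 2))
    (w : Fin 6 → EuclideanSpace ℝ (Fin 3))
    (hw : ∀ k : Fin 6, w k = (WithLp.equiv 2 (Fin 3 → ℝ)).symm
      (if (k : ℕ) < 3 then
        ![R * Real.cos (2 * π * k / 3), R * Real.sin (2 * π * k / 3), -z0]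
      else
        ![R * Real.cos (2 * π * ((k : ℕ) - 3) / 3),
          R * Real.sin (2 * π * ((k : ℕ) - 3) / 3), z0])) :
    ∀ k, (5 / 2 : ℝ) • w k =
      ∑ j ∈ Finset.univ.erase k, (‖w k - w j‖ ^ 2)⁻¹ • (w k - w j) :=
  three_three_points_critical_general z0 hz0 R hR w hw
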